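/- Let M = [A; ε, B] ∈ M_n(Z_p) be a size-sorted Hessenberg matrix with B of size m, and suppose the small factor χ_small of χ_M (the monic factor congruent to χ_B modulo ε given by Hensel's lemma) satisfies ‖χ_small − t^m‖ ≤ |ε|. Then after m QR-rounds (each round: factor M = QR with Q ∈ GL_n(Z_p), R upper triangular, and replace M by RQ), the resulting matrix M' = [A'; ε', B'] satisfies |ε'| ≤ |ε|². -/

import Mathlib

/-!
Let `M ^ b = Q R` be the accumulated QR factorisation, so that `M_b = Q⁻¹ M Q`. Modulo `ε` the
matrix `M` is block upper triangular with `A` invertible and `B ^ b ≡ 0`; hence the top-left block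
of `R` is invertible and the bottom rows of `R` vanish mod `ε`. A Bézout relation
`w t ^ b + z χbig = 1` yields the spectral projector `P` of `M` onto the `χbig`-part, which is
`≡ [1 *; 0 0]` mod `ε` and equals `M ^ b K` with the bottom rows of `K` divisible by `ε`.
Splitting `Q⁻¹ M Q = Q⁻¹ (P M + M (1 - P)) Q`, the lower-left block of the first summand gets a
factor `ε` from `R` and one from `K`. For the second, `(1 - P) M ^ b = (M ^ b - χsmall(M)) (1 - P)`,
where `M ^ b - χsmall(M) ≡ 0` by `‖χsmall - t ^ b‖ ≤ |ε|` and the first columns of `1 - P` are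
`≡ 0`; the invertible top-left block of `R` transfers this `ε ^ 2` to the first columns of
`(1 - P) Q`.
-/

open Matrix Polynomial IsLocalRing

namespace Polynomial

theorem isCoprime_X_of_isUnit_coeff_zero {R : Type*} [CommRing R] {f : R[X]}
    (hf : IsUnit (f.coeff 0)) : IsCoprime X f := by
  have hinv : C (↑hf.unit⁻¹ : R) * C (f.coeff 0) = 1 := by
    rw [← C_mul, hf.val_inv_mul, C_1]
  exact ⟨-(C (↑hf.unit⁻¹ : R) * f.divX), C (↑hf.unit⁻¹ : R), by
    linear_combination -C (↑hf.unit⁻¹ : R) * divX_mul_X_add f + hinv⟩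

theorem aeval_eq_aeval_of_C_dvd_sub {R A : Type*} [CommRing R] [Ring A] [Algebra R A]
    {c : R} (hc : algebraMap R A c = 0) {f g : R[X]} (h : C c ∣ f - g) (x : A) :
    aeval x f = aeval x g := by
  obtain ⟨q, hq⟩ := h
  rw [← sub_eq_zero, ← map_sub, hq, map_mul, aeval_C, hc, zero_mul]

end Polynomial

theorem IsLocalRing.isUnit_of_dvd_sub {R : Type*} [CommRing R] [IsLocalRing R] {c x y : R}
    (hc : c ∈ maximalIdeal R) (hy : IsUnit y) (h : c ∣ x - y) : IsUnit x := by
  by_contra hx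
  have hxy : x - y ∈ maximalIdeal R := Ideal.mem_of_dvd _ h hc
  exact (mem_maximalIdeal _).mp (by simpa using sub_mem ((mem_maximalIdeal _).mpr hx) hxy) hy

namespace PadicInt

variable {p : ℕ} [Fact p.Prime]

theorem isUnit_of_toZMod_ne_zero {x : ℤ_[p]} (h : toZMod x ≠ 0) : IsUnit x := by
  by_contra hx
  apply h
  rw [← RingHom.mem_ker, ker_toZMod]
  exact (mem_maximalIdeal x).mpr hx

theorem dvd_of_norm_le {x y : ℤ_[p]} (h : ‖x‖ ≤ ‖y‖) : y ∣ x := by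
  rcases eq_or_ne y 0 with rfl | hy
  · simp [norm_le_zero_iff.mp (by simpa using h)]
  have hy' : (y : ℚ_[p]) ≠ 0 := coe_ne_zero.mpr hy
  refine ⟨⟨x / y, ?_⟩, Subtype.ext ?_⟩
  · rw [norm_div, div_le_one (norm_pos_iff.mpr hy')]
    exact h
  · exact (mul_div_cancel₀ _ hy').symm

theorem norm_le_of_dvd {x y : ℤ_[p]} (h : y ∣ x) : ‖x‖ ≤ ‖y‖ := by
  obtain ⟨c, rfl⟩ := h
  rw [norm_mul]
  exact mul_le_of_le_one_right (norm_nonneg _) (norm_le_one c)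

end PadicInt

namespace Matrix

theorem exists_pow_eq_mul_of_qrRounds {n α : Type*} [Fintype n] [DecidableEq n] [LinearOrder n]
    [Semiring α] (Mseq : ℕ → Matrix n n α) (k : ℕ)
    (hQR : ∀ i < k, ∃ Q R : Matrix n n α, IsUnit Q ∧ R.IsUpperTriangular ∧
      Mseq i = Q * R ∧ Mseq (i + 1) = R * Q) :
    ∃ Q R : Matrix n n α, IsUnit Q ∧ R.IsUpperTriangular ∧
      Mseq 0 ^ k = Q * R ∧ Q * Mseq k = Mseq 0 * Q := by
  induction k with
  | zero => exact ⟨1, 1, isUnit_one, blockTriangular_one, by simp, by simp⟩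
  | succ k ih =>
    obtain ⟨Q, R, hQ, hR, hpow, hconj⟩ := ih fun i hi => hQR i (by omega)
    obtain ⟨Q', R', hQ', hR', hfac, hswap⟩ := hQR k (by omega)
    refine ⟨Q * Q', R' * R, hQ.mul hQ', hR'.mul hR, ?_, ?_⟩
    · rw [pow_succ', hpow, ← mul_assoc, ← hconj, hfac]
      simp only [mul_assoc]
    · rw [hswap, mul_assoc, ← mul_assoc Q', ← hfac, ← mul_assoc, hconj, mul_assoc]

theorem aeval_mul_eq_mul_aeval_of_mul_eq {R A m n : Type*} [CommSemiring R] [Semiring A]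
    [Algebra R A] [Fintype m] [DecidableEq m] [Fintype n] [DecidableEq n]
    {X : Matrix m m A} {Y : Matrix n n A} {N : Matrix m n A} (h : X * N = N * Y) (f : R[X]) :
    aeval X f * N = N * aeval Y f := by
  have hpow : ∀ k : ℕ, X ^ k * N = N * Y ^ k := fun k => by
    induction k with
    | zero => simp
    | succ k ih =>
      rw [pow_succ, Matrix.mul_assoc, h, ← Matrix.mul_assoc, ih, Matrix.mul_assoc, ← pow_succ]
  simp only [aeval_eq_sum_range, Matrix.sum_mul, Matrix.mul_sum, Matrix.smul_mul,
    Matrix.mul_smul, hpow]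

theorem map_aeval_algebraMap {R A n : Type*} [CommRing R] [CommRing A] [Algebra R A] [Fintype n]
    [DecidableEq n] (X : Matrix n n R) (f : R[X]) :
    (aeval X f).map (algebraMap R A) = aeval (X.map (algebraMap R A)) f :=
  (aeval_algHom_apply (Algebra.ofId R A).mapMatrix X f).symm

section EntrywiseDvd

variable {R : Type*} [CommRing R] {l m n : Type*} {c d : R}

def EntrywiseDvd (c : R) (X : Matrix m n R) : Prop := ∀ i j, c ∣ X i j

theorem entrywiseDvd_iff_map_eq_zero {X : Matrix m n R} :
    EntrywiseDvd c X ↔ X.map (algebraMap R (R ⧸ Ideal.span {c})) = 0 := by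
  simp only [EntrywiseDvd, ← Matrix.ext_iff, map_apply, zero_apply, Ideal.Quotient.algebraMap_eq,
    Ideal.Quotient.eq_zero_iff_dvd]

namespace EntrywiseDvd

theorem add {X Y : Matrix m n R} (hX : EntrywiseDvd c X) (hY : EntrywiseDvd c Y) :
    EntrywiseDvd c (X + Y) := fun i j => dvd_add (hX i j) (hY i j)

theorem mul [Fintype m] {X : Matrix l m R} {Y : Matrix m n R} (hX : EntrywiseDvd c X)
    (hY : EntrywiseDvd d Y) : EntrywiseDvd (c * d) (X * Y) := fun i j =>
  Finset.dvd_sum fun k _ => mul_dvd_mul (hX i k) (hY k j)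

theorem mul_left [Fintype m] {Y : Matrix m n R} (hY : EntrywiseDvd c Y) (X : Matrix l m R) :
    EntrywiseDvd c (X * Y) := by
  simpa using (show EntrywiseDvd 1 X from fun _ _ => one_dvd _).mul hY

theorem mul_right [Fintype m] {X : Matrix l m R} (hX : EntrywiseDvd c X) (Y : Matrix m n R) :
    EntrywiseDvd c (X * Y) := by
  simpa using hX.mul (show EntrywiseDvd 1 Y from fun _ _ => one_dvd _)

end EntrywiseDvd

theorem entrywiseDvd_aeval [Fintype n] [DecidableEq n] (X : Matrix n n R) {f : R[X]}
    (hf : C c ∣ f) : EntrywiseDvd c (aeval X f) := fun i j => by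
  obtain ⟨q, rfl⟩ := hf
  rw [map_mul, aeval_C, Algebra.algebraMap_eq_smul_one, Matrix.smul_mul, Matrix.one_mul,
    smul_apply, smul_eq_mul]
  exact dvd_mul_right _ _

theorem dvd_det_sub_det_of_entrywiseDvd [Fintype n] [DecidableEq n] {X Y : Matrix n n R}
    (h : EntrywiseDvd c (X - Y)) : c ∣ X.det - Y.det := by
  rw [entrywiseDvd_iff_map_eq_zero, ← RingHom.mapMatrix_apply, map_sub, sub_eq_zero] at h
  rw [← Ideal.Quotient.eq_zero_iff_dvd, ← Ideal.Quotient.algebraMap_eq, map_sub, sub_eq_zero,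
    RingHom.map_det, RingHom.map_det, h]

theorem aeval_map_quotient_eq_zero_of_C_dvd_sub [Fintype n] [DecidableEq n] (N : Matrix n n R)
    {f : R[X]} (hf : C c ∣ f - N.charpoly) :
    aeval (N.map (algebraMap R (R ⧸ Ideal.span {c}))) f = 0 := by
  have hc : algebraMap R (Matrix n n (R ⧸ Ideal.span {c})) c = 0 := by
    rw [IsScalarTower.algebraMap_apply R (R ⧸ Ideal.span {c}), Ideal.Quotient.algebraMap_eq,
      (Ideal.Quotient.eq_zero_iff_dvd c c).mpr dvd_rfl, map_zero]
  rw [aeval_eq_aeval_of_C_dvd_sub hc hf, ← map_aeval_algebraMap, aeval_self_charpoly,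
    Matrix.map_zero _ (map_zero _)]

end EntrywiseDvd

section Blocks

variable {R : Type*} [CommRing R] {a b : ℕ} {m : Type*}

variable (R a b) in
def blockIncl : Matrix (Fin (a + b)) (Fin a) R := (1 : Matrix _ _ R).submatrix id (Fin.castAdd b)

variable (R a b) in
def blockProj : Matrix (Fin b) (Fin (a + b)) R := (1 : Matrix _ _ R).submatrix (Fin.natAdd a) id

-- `π₂ * X * ι₁` is the lower-left `b × a` block of `X`, and `ι₁ᵀ * X * ι₁` its upper-left block.
local notation "ι₁" => blockIncl R a b
local notation "π₂" => blockProj R a b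

@[simp]
theorem mul_blockIncl [Fintype m] (X : Matrix m (Fin (a + b)) R) :
    X * ι₁ = X.submatrix id (Fin.castAdd b) :=
  mul_submatrix_one (Equiv.refl _) (Fin.castAdd b) X

@[simp]
theorem blockProj_mul (X : Matrix (Fin (a + b)) m R) :
    π₂ * X = X.submatrix (Fin.natAdd a) id :=
  one_submatrix_mul (Fin.natAdd a) (Equiv.refl _) X

@[simp]
theorem blockIncl_transpose_mul (X : Matrix (Fin (a + b)) m R) :
    ι₁ᵀ * X = X.submatrix (Fin.castAdd b) id := by
  rw [blockIncl, transpose_submatrix, transpose_one]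
  exact one_submatrix_mul (Fin.castAdd b) (Equiv.refl _) X

@[simp]
theorem mul_blockProj_transpose [Fintype m] (X : Matrix m (Fin (a + b)) R) :
    X * π₂ᵀ = X.submatrix id (Fin.natAdd a) := by
  rw [blockProj, transpose_submatrix, transpose_one]
  exact mul_submatrix_one (Equiv.refl _) (Fin.natAdd a) X

@[simp]
theorem blockIncl_map {S : Type*} [CommRing S] (f : R →+* S) :
    (ι₁).map f = blockIncl S a b := by
  ext i j
  simp [blockIncl, one_apply, apply_ite f]

@[simp]
theorem blockProj_map {S : Type*} [CommRing S] (f : R →+* S) :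
    (π₂).map f = blockProj S a b := by
  ext i j
  simp [blockProj, one_apply, apply_ite f]

theorem blockIncl_mul_transpose_add : ι₁ * ι₁ᵀ + π₂ᵀ * π₂ = 1 := by
  ext k l
  rw [← Matrix.mul_one (1 : Matrix (Fin (a + b)) (Fin (a + b)) R), mul_apply, Fin.sum_univ_add]
  simp only [blockIncl, transpose_submatrix, transpose_one, blockProj, add_apply, mul_apply,
    submatrix_apply]
  rfl

theorem blockIncl_transpose_mul_blockIncl : ι₁ᵀ * ι₁ = 1 := by
  rw [blockIncl_transpose_mul]
  ext i j
  simp [blockIncl, one_apply]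

theorem blockProj_mul_blockIncl : π₂ * ι₁ = 0 := by
  rw [blockProj_mul]
  ext i j
  simp only [blockIncl, submatrix_apply, id_eq, one_apply, Fin.ext_iff, Fin.val_natAdd,
    Fin.val_castAdd, zero_apply, ite_eq_right_iff]
  omega

variable {X : Matrix (Fin (a + b)) (Fin (a + b)) R}

theorem blockProj_mul_mul_blockIncl_of_isUpperTriangular (hX : X.IsUpperTriangular) :
    π₂ * X * ι₁ = 0 := by
  ext i j
  simp only [mul_blockIncl, blockProj_mul, submatrix_apply, id_eq, zero_apply]
  exact hX (show Fin.castAdd b j < Fin.natAdd a i by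
    rw [Fin.lt_def, Fin.val_castAdd, Fin.val_natAdd]; omega)

theorem mul_blockIncl_of_blockUpper (hX : π₂ * X * ι₁ = 0) : X * ι₁ = ι₁ * (ι₁ᵀ * X * ι₁) := by
  conv_lhs => rw [← Matrix.one_mul X, ← blockIncl_mul_transpose_add]
  simp only [Matrix.add_mul, Matrix.mul_assoc] at hX ⊢
  rw [hX, Matrix.mul_zero, add_zero]

theorem blockProj_mul_of_blockUpper (hX : π₂ * X * ι₁ = 0) : π₂ * X = π₂ * X * π₂ᵀ * π₂ := by
  conv_lhs => rw [← Matrix.mul_one X, ← blockIncl_mul_transpose_add]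
  rw [Matrix.mul_add, Matrix.mul_add, ← Matrix.mul_assoc, ← Matrix.mul_assoc, ← Matrix.mul_assoc,
    hX, Matrix.zero_mul, zero_add, Matrix.mul_assoc _ _ π₂]

theorem mul_blockIncl_eq_mul_inv_of_blockUpper [Fintype m] {C : Matrix m (Fin (a + b)) R}
    (hX : π₂ * X * ι₁ = 0) (hT : IsUnit (ι₁ᵀ * X * ι₁).det) :
    C * ι₁ = C * X * ι₁ * (ι₁ᵀ * X * ι₁)⁻¹ := by
  rw [Matrix.mul_assoc C, mul_blockIncl_of_blockUpper hX, ← Matrix.mul_assoc, Matrix.mul_assoc,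
    mul_nonsing_inv _ hT, Matrix.mul_one]

theorem blockProj_mul_inv_mul_blockIncl (hX : π₂ * X * ι₁ = 0) (hXu : IsUnit X) :
    π₂ * X⁻¹ * ι₁ = 0 := by
  have hdet := (isUnit_iff_isUnit_det X).mp hXu
  set T := ι₁ᵀ * X * ι₁
  set T' := ι₁ᵀ * X⁻¹ * ι₁
  have hT'T : T' * T = 1 := by
    rw [Matrix.mul_assoc _ ι₁, ← mul_blockIncl_of_blockUpper hX, Matrix.mul_assoc,
      ← Matrix.mul_assoc X⁻¹, nonsing_inv_mul _ hdet, Matrix.one_mul,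
      blockIncl_transpose_mul_blockIncl]
  calc π₂ * X⁻¹ * ι₁
      = π₂ * X⁻¹ * (ι₁ * T) * T' := by
        rw [Matrix.mul_assoc _ (_ * T), Matrix.mul_assoc ι₁, mul_eq_one_comm.mp hT'T,
          Matrix.mul_one]
    _ = π₂ * (X⁻¹ * X) * ι₁ * T' := by
        rw [← mul_blockIncl_of_blockUpper hX]
        simp only [Matrix.mul_assoc]
    _ = 0 := by
        rw [nonsing_inv_mul _ hdet, Matrix.mul_one, blockProj_mul_blockIncl, Matrix.zero_mul]

theorem blockProj_mul_eq_zero_of_eq_mul {Q U : Matrix (Fin (a + b)) (Fin (a + b)) R}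
    (hXQU : X = Q * U) (hQ : IsUnit Q) (hU : π₂ * U * ι₁ = 0) (hT : IsUnit (ι₁ᵀ * U * ι₁).det)
    (hX : π₂ * X = 0) : π₂ * U = 0 := by
  have hQ₂₁ : π₂ * Q * ι₁ = 0 := by
    rw [mul_blockIncl_eq_mul_inv_of_blockUpper hU hT, Matrix.mul_assoc _ Q, ← hXQU, hX,
      Matrix.zero_mul, Matrix.zero_mul]
  have hU_eq : U = Q⁻¹ * X := by
    rw [hXQU, ← Matrix.mul_assoc, nonsing_inv_mul _ ((isUnit_iff_isUnit_det Q).mp hQ),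
      Matrix.one_mul]
  rw [hU_eq, ← Matrix.mul_assoc,
    blockProj_mul_of_blockUpper (blockProj_mul_inv_mul_blockIncl hQ₂₁ hQ), Matrix.mul_assoc _ _ X,
    hX, Matrix.mul_zero]

end Blocks

section BlockUpperAeval

variable {R A : Type*} [CommRing R] [CommRing A] [Algebra R A] {a b : ℕ}
  {M : Matrix (Fin (a + b)) (Fin (a + b)) A}

local notation "ι₁" => blockIncl A a b
local notation "π₂" => blockProj A a b

theorem aeval_mul_blockIncl_eq_zero (hM : π₂ * M * ι₁ = 0) {f : R[X]}
    (hf : aeval (ι₁ᵀ * M * ι₁) f = 0) : aeval M f * ι₁ = 0 := by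
  rw [aeval_mul_eq_mul_aeval_of_mul_eq (mul_blockIncl_of_blockUpper hM) f, hf, Matrix.mul_zero]

theorem blockProj_mul_aeval_eq_zero (hM : π₂ * M * ι₁ = 0) {g : R[X]}
    (hg : aeval (π₂ * M * π₂ᵀ) g = 0) : π₂ * aeval M g = 0 := by
  rw [← aeval_mul_eq_mul_aeval_of_mul_eq (blockProj_mul_of_blockUpper hM).symm g, hg,
    Matrix.zero_mul]

end BlockUpperAeval

section Projector

variable {R n : Type*} [CommRing R] [Fintype n] [DecidableEq n]

theorem commute_inv_aeval {M : Matrix n n R} {e : R[X]} (he : IsUnit (aeval M e)) (h : R[X]) :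
    Commute (aeval M e)⁻¹ (aeval M h) := by
  rw [← he.unit_spec, ← coe_units_inv]
  exact Commute.units_inv_left (by rw [he.unit_spec]; exact (Commute.all e h).map (aeval M))

variable (M : Matrix n n R) (f g u v : R[X])

-- When `f(M) g(M) = 0` and `u f + v g` is invertible at `M`, this is the projection onto
-- `ker f(M)` along `ker g(M)`.
noncomputable def bezoutProjector : Matrix n n R :=
  (aeval M (u * f + v * g))⁻¹ * aeval M (v * g)

variable {M f g u v} (hG : IsUnit (aeval M (u * f + v * g)))
include hG

theorem commute_bezoutProjector_aeval (h : R[X]) :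
    Commute (bezoutProjector M f g u v) (aeval M h) :=
  (commute_inv_aeval hG h).mul_left ((Commute.all _ h).map (aeval M))

theorem bezoutProjector_eq_aeval_mul_inv :
    bezoutProjector M f g u v = aeval M (v * g) * (aeval M (u * f + v * g))⁻¹ :=
  (commute_inv_aeval hG _).eq

theorem one_sub_bezoutProjector :
    1 - bezoutProjector M f g u v = (aeval M (u * f + v * g))⁻¹ * aeval M (u * f) := by
  rw [bezoutProjector, ← nonsing_inv_mul _ ((isUnit_iff_isUnit_det _).mp hG), ← Matrix.mul_sub,
    map_add, add_sub_cancel_right]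

theorem aeval_mul_bezoutProjector (hfg : aeval M (f * g) = 0) :
    aeval M f * bezoutProjector M f g u v = 0 := by
  rw [bezoutProjector, ← Matrix.mul_assoc, ← (commute_inv_aeval hG f).eq, Matrix.mul_assoc,
    ← map_mul, mul_left_comm, map_mul, hfg, Matrix.mul_zero, Matrix.mul_zero]

theorem aeval_mul_one_sub_bezoutProjector (hfg : aeval M (f * g) = 0) :
    aeval M g * (1 - bezoutProjector M f g u v) = 0 := by
  rw [one_sub_bezoutProjector hG, ← Matrix.mul_assoc, ← (commute_inv_aeval hG g).eq,
    Matrix.mul_assoc, ← map_mul, mul_left_comm, mul_comm g, map_mul, hfg, Matrix.mul_zero,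
    Matrix.mul_zero]

end Projector

section BlockUpperModulo

variable {R : Type*} [CommRing R] {a b : ℕ} {ε : R} {M Q U : Matrix (Fin (a + b)) (Fin (a + b)) R}

local notation "ι₁" => blockIncl R a b
local notation "π₂" => blockProj R a b

theorem map_blockLower_eq_zero (hM : EntrywiseDvd ε (π₂ * M * ι₁)) :
    blockProj (R ⧸ Ideal.span {ε}) a b * M.map (algebraMap R (R ⧸ Ideal.span {ε})) *
      blockIncl (R ⧸ Ideal.span {ε}) a b = 0 := by
  rwa [entrywiseDvd_iff_map_eq_zero, Matrix.map_mul, Matrix.map_mul, blockProj_map,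
    blockIncl_map] at hM

theorem entrywiseDvd_aeval_mul_blockIncl (hM : EntrywiseDvd ε (π₂ * M * ι₁)) {f : R[X]}
    (hf : C ε ∣ f - (ι₁ᵀ * M * ι₁).charpoly) : EntrywiseDvd ε (aeval M f * ι₁) := by
  have hf' := aeval_map_quotient_eq_zero_of_C_dvd_sub _ hf
  simp only [Matrix.map_mul, transpose_map, blockIncl_map] at hf'
  rw [entrywiseDvd_iff_map_eq_zero, Matrix.map_mul, blockIncl_map, map_aeval_algebraMap]
  exact aeval_mul_blockIncl_eq_zero (map_blockLower_eq_zero hM) hf'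

theorem entrywiseDvd_blockProj_mul_aeval (hM : EntrywiseDvd ε (π₂ * M * ι₁)) {g : R[X]}
    (hg : C ε ∣ g - (π₂ * M * π₂ᵀ).charpoly) : EntrywiseDvd ε (π₂ * aeval M g) := by
  have hg' := aeval_map_quotient_eq_zero_of_C_dvd_sub _ hg
  simp only [Matrix.map_mul, transpose_map, blockProj_map] at hg'
  rw [entrywiseDvd_iff_map_eq_zero, Matrix.map_mul, blockProj_map, map_aeval_algebraMap]
  exact blockProj_mul_aeval_eq_zero (map_blockLower_eq_zero hM) hg'

theorem entrywiseDvd_blockTopLeft_aeval_sub (hM : EntrywiseDvd ε (π₂ * M * ι₁)) (f : R[X]) :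
    EntrywiseDvd ε (ι₁ᵀ * aeval M f * ι₁ - aeval (ι₁ᵀ * M * ι₁) f) := by
  rw [entrywiseDvd_iff_map_eq_zero, Matrix.map_sub _ (map_sub _)]
  simp only [Matrix.map_mul, transpose_map, blockIncl_map, map_aeval_algebraMap]
  rw [Matrix.mul_assoc,
    aeval_mul_eq_mul_aeval_of_mul_eq (mul_blockIncl_of_blockUpper (map_blockLower_eq_zero hM)),
    ← Matrix.mul_assoc, blockIncl_transpose_mul_blockIncl, Matrix.one_mul, sub_self]

theorem isUnit_det_blockTopLeft_of_pow_eq_mul [IsLocalRing R] (hε : ε ∈ maximalIdeal R)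
    (hM : EntrywiseDvd ε (π₂ * M * ι₁)) (hA : IsUnit (ι₁ᵀ * M * ι₁).det) (hQU : M ^ b = Q * U)
    (hU : U.IsUpperTriangular) : IsUnit (ι₁ᵀ * U * ι₁).det := by
  have hMb : IsUnit (ι₁ᵀ * M ^ b * ι₁).det := by
    refine isUnit_of_dvd_sub hε (hA.pow b) ?_
    simpa using dvd_det_sub_det_of_entrywiseDvd (entrywiseDvd_blockTopLeft_aeval_sub hM (X ^ b))
  rw [hQU, ← Matrix.mul_assoc, Matrix.mul_assoc _ U,
    mul_blockIncl_of_blockUpper (blockProj_mul_mul_blockIncl_of_isUpperTriangular hU),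
    ← Matrix.mul_assoc, det_mul] at hMb
  exact isUnit_of_mul_isUnit_right hMb

theorem entrywiseDvd_blockProj_mul_of_pow_eq_mul (hM : EntrywiseDvd ε (π₂ * M * ι₁))
    (hB : C ε ∣ X ^ b - (π₂ * M * π₂ᵀ).charpoly) (hQU : M ^ b = Q * U) (hQ : IsUnit Q)
    (hU : U.IsUpperTriangular) (hT : IsUnit (ι₁ᵀ * U * ι₁).det) : EntrywiseDvd ε (π₂ * U) := by
  set φ := algebraMap R (R ⧸ Ideal.span {ε})
  have hMb := entrywiseDvd_blockProj_mul_aeval hM hB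
  rw [aeval_X_pow, entrywiseDvd_iff_map_eq_zero, Matrix.map_mul, blockProj_map] at hMb
  have hTφ := hT.map φ
  rw [RingHom.map_det, RingHom.mapMatrix_apply] at hTφ
  simp only [Matrix.map_mul, transpose_map, blockIncl_map] at hTφ
  rw [entrywiseDvd_iff_map_eq_zero, Matrix.map_mul, blockProj_map]
  refine blockProj_mul_eq_zero_of_eq_mul (Q := Q.map φ) ?_ (hQ.map φ.mapMatrix)
    (blockProj_mul_mul_blockIncl_of_isUpperTriangular (hU.map φ)) hTφ hMb
  rw [← RingHom.mapMatrix_apply, ← RingHom.mapMatrix_apply, ← RingHom.mapMatrix_apply, hQU,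
    map_mul]

theorem exists_projector_of_charpoly_eq_mul [IsLocalRing R] (hε : ε ∈ maximalIdeal R)
    (hM : EntrywiseDvd ε (π₂ * M * ι₁)) (hA : IsUnit (ι₁ᵀ * M * ι₁).det) {χbig χsmall : R[X]}
    (hfact : M.charpoly = χbig * χsmall) (hbig : C ε ∣ χbig - (ι₁ᵀ * M * ι₁).charpoly)
    (hsmall : C ε ∣ χsmall - (π₂ * M * π₂ᵀ).charpoly) (hX : C ε ∣ χsmall - X ^ b) :
    ∃ P K : Matrix (Fin (a + b)) (Fin (a + b)) R, Commute P M ∧ M ^ b * K = P ∧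
      EntrywiseDvd ε (π₂ * K) ∧ EntrywiseDvd ε ((1 - P) * ι₁) ∧
      aeval M χsmall * (1 - P) = 0 := by
  have hcoeff : IsUnit (χbig.coeff 0) := by
    rw [det_eq_sign_charpoly_coeff] at hA
    refine isUnit_of_dvd_sub hε (isUnit_of_mul_isUnit_right hA) ?_
    simpa using (C_dvd_iff_dvd_coeff _ _).mp hbig 0
  obtain ⟨w, z, hwz⟩ := (isCoprime_X_of_isUnit_coeff_zero hcoeff).pow_left (m := b)
  have hfg : aeval M (χbig * χsmall) = 0 := by rw [← hfact, aeval_self_charpoly]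
  have hG : IsUnit (aeval M (z * χbig + w * χsmall)) := by
    have hdiff : aeval M (z * χbig + w * χsmall) - 1 = aeval M (w * (χsmall - X ^ b)) := by
      rw [← map_one (aeval (R := R) M), ← map_sub]
      congr 1
      linear_combination hwz
    refine (isUnit_iff_isUnit_det _).mpr (isUnit_of_dvd_sub hε isUnit_one ?_)
    have h := dvd_det_sub_det_of_entrywiseDvd
      (hdiff ▸ entrywiseDvd_aeval M (dvd_mul_of_dvd_right hX w))
    rwa [det_one] at h
  refine ⟨bezoutProjector M χbig χsmall z w, aeval M w * bezoutProjector M χbig χsmall z w,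
    by simpa using commute_bezoutProjector_aeval hG X, ?_, ?_, ?_,
    aeval_mul_one_sub_bezoutProjector hG hfg⟩
  · rw [← Matrix.mul_assoc, ← aeval_X_pow (R := R), ← map_mul,
      show X ^ b * w = 1 - z * χbig by linear_combination hwz, map_sub, map_one, Matrix.sub_mul,
      Matrix.one_mul, map_mul, Matrix.mul_assoc, aeval_mul_bezoutProjector hG hfg, Matrix.mul_zero,
      sub_zero]
  · have hK : aeval M w * bezoutProjector M χbig χsmall z w =
        aeval M χsmall * (aeval M (w * w) * (aeval M (z * χbig + w * χsmall))⁻¹) := by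
      rw [bezoutProjector_eq_aeval_mul_inv hG, ← Matrix.mul_assoc, ← Matrix.mul_assoc, ← map_mul,
        ← map_mul]
      congr 2
      ring
    rw [hK, ← Matrix.mul_assoc]
    exact (entrywiseDvd_blockProj_mul_aeval hM hsmall).mul_right _
  · rw [one_sub_bezoutProjector hG, map_mul, Matrix.mul_assoc, Matrix.mul_assoc]
    exact ((entrywiseDvd_aeval_mul_blockIncl hM hbig).mul_left _).mul_left _

theorem entrywiseDvd_mul_self_one_sub_mul_blockIncl {χsmall : R[X]} {P : Matrix _ _ R}
    (hX : C ε ∣ χsmall - X ^ b) (hPM : Commute P M) (hsmallP : aeval M χsmall * (1 - P) = 0)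
    (hPι : EntrywiseDvd ε ((1 - P) * ι₁)) (hQU : M ^ b = Q * U) (hUb : π₂ * U * ι₁ = 0)
    (hT : IsUnit (ι₁ᵀ * U * ι₁).det) : EntrywiseDvd (ε * ε) ((1 - P) * Q * ι₁) := by
  have hpow : EntrywiseDvd ε (M ^ b - aeval M χsmall) := by
    rw [← aeval_X_pow (R := R), ← map_sub]
    exact entrywiseDvd_aeval M (dvd_sub_comm.mp hX)
  have hcomm : (1 - P) * M ^ b = (M ^ b - aeval M χsmall) * (1 - P) := by
    rw [Matrix.sub_mul (M ^ b), hsmallP, sub_zero,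
      ((Commute.one_left _).sub_left (hPM.pow_right b)).eq]
  rw [mul_blockIncl_eq_mul_inv_of_blockUpper hUb hT, Matrix.mul_assoc _ Q, ← hQU, hcomm,
    Matrix.mul_assoc (_ - _)]
  exact (hpow.mul hPι).mul_right _

theorem entrywiseDvd_mul_self_blockLower_of_qrRounds [IsLocalRing R] (hε : ε ∈ maximalIdeal R)
    (hM : EntrywiseDvd ε (π₂ * M * ι₁)) (hA : IsUnit (ι₁ᵀ * M * ι₁).det) {χbig χsmall : R[X]}
    (hfact : M.charpoly = χbig * χsmall) (hbig : C ε ∣ χbig - (ι₁ᵀ * M * ι₁).charpoly)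
    (hsmall : C ε ∣ χsmall - (π₂ * M * π₂ᵀ).charpoly) (hX : C ε ∣ χsmall - X ^ b)
    (Mseq : ℕ → Matrix (Fin (a + b)) (Fin (a + b)) R) (hM0 : Mseq 0 = M)
    (hQR : ∀ i < b, ∃ Q U : Matrix (Fin (a + b)) (Fin (a + b)) R, IsUnit Q ∧
      U.IsUpperTriangular ∧ Mseq i = Q * U ∧ Mseq (i + 1) = U * Q) :
    EntrywiseDvd (ε * ε) (π₂ * Mseq b * ι₁) := by
  obtain ⟨Q, U, hQ, hU, hQU, hconj⟩ := exists_pow_eq_mul_of_qrRounds Mseq b hQR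
  rw [hM0] at hQU hconj
  obtain ⟨P, K, hPM, hK, hπK, hPι, hsmallP⟩ :=
    exists_projector_of_charpoly_eq_mul hε hM hA hfact hbig hsmall hX
  have hB : C ε ∣ X ^ b - (π₂ * M * π₂ᵀ).charpoly := by
    rw [← sub_sub_sub_cancel_left _ _ χsmall]
    exact dvd_sub hsmall hX
  have hUb := blockProj_mul_mul_blockIncl_of_isUpperTriangular hU
  have hT := isUnit_det_blockTopLeft_of_pow_eq_mul hε hM hA hQU hU
  have hπU := entrywiseDvd_blockProj_mul_of_pow_eq_mul hM hB hQU hQ hU hT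
  have hQinv : Q⁻¹ * Q = 1 := nonsing_inv_mul _ ((isUnit_iff_isUnit_det Q).mp hQ)
  have h1PQ := entrywiseDvd_mul_self_one_sub_mul_blockIncl hX hPM hsmallP hPι hQU hUb hT
  have hsplit : M = M ^ b * K * M + M * (1 - P) := by
    rw [hK, Matrix.mul_sub, Matrix.mul_one, hPM.eq, add_sub_cancel]
  have hπUK : π₂ * U * π₂ᵀ * (π₂ * K) = π₂ * Q⁻¹ * M ^ b * K := by
    rw [← Matrix.mul_assoc, ← blockProj_mul_of_blockUpper hUb,
      show U = Q⁻¹ * M ^ b by rw [hQU, ← Matrix.mul_assoc, hQinv, Matrix.one_mul]]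
    simp only [Matrix.mul_assoc]
  have key : π₂ * Mseq b * ι₁ =
      π₂ * U * π₂ᵀ * (π₂ * K) * (M * Q * ι₁) + π₂ * Q⁻¹ * M * ((1 - P) * Q * ι₁) := by
    rw [show Mseq b = Q⁻¹ * M * Q by
      rw [Matrix.mul_assoc, ← hconj, ← Matrix.mul_assoc, hQinv, Matrix.one_mul], hπUK]
    conv_lhs => rw [hsplit]
    simp only [Matrix.mul_add, Matrix.add_mul, Matrix.mul_assoc]
  rw [key]
  exact (((hπU.mul_right _).mul hπK).mul_right _).add (h1PQ.mul_left _)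

end BlockUpperModulo

end Matrix

theorem entrywiseDvd_blockLower_of_single_entry {R : Type*} [CommRing R] {a b : ℕ}
    {M : Matrix (Fin (a + b)) (Fin (a + b)) R} {ε : R} {i₀ j₀ : Fin (a + b)}
    (hi₀ : (i₀ : ℕ) = a) (hj₀ : (j₀ : ℕ) = a - 1) (hε : ε = M i₀ j₀)
    (hE : ∀ i j : Fin (a + b), a ≤ (i : ℕ) → (j : ℕ) < a →
      ¬((i : ℕ) = a ∧ (j : ℕ) = a - 1) → M i j = 0) :
    EntrywiseDvd ε (blockProj R a b * M * blockIncl R a b) := fun i j => by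
  simp only [mul_blockIncl, blockProj_mul, submatrix_apply, id_eq]
  by_cases hij : ((Fin.natAdd a i : Fin (a + b)) : ℕ) = a ∧
      ((Fin.castAdd b j : Fin (a + b)) : ℕ) = a - 1
  · rw [Fin.ext (hij.1.trans hi₀.symm), Fin.ext (hij.2.trans hj₀.symm), ← hε]
  · rw [hE _ _ (by simp) (by simp) hij]
    exact dvd_zero ε

/-- if `M = [A; ε, B]` is a size-sorted Hessenberg matrix with `B` of size
`m = b` and the Hensel factor `χ_small` (monic, `≡ χ_B mod ε`) satisfies
`‖χ_small − t^b‖ ≤ |ε|`, then after `b` QR-rounds the connecting entry `ε'` satisfies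
`|ε'| ≤ |ε|²`. -/
theorem statement12 {p : ℕ} [Fact p.Prime] {a b : ℕ} (ha : 0 < a) (hb : 0 < b)
    (M : Matrix (Fin (a + b)) (Fin (a + b)) ℤ_[p])
    (A : Matrix (Fin a) (Fin a) ℤ_[p])
    (hA : ∀ i j, A i j = M (Fin.castAdd b i) (Fin.castAdd b j))
    (B : Matrix (Fin b) (Fin b) ℤ_[p])
    (hB : ∀ i j, B i j = M (Fin.natAdd a i) (Fin.natAdd a j))
    (ε : ℤ_[p])
    (hε : ε = M ⟨a, by omega⟩ ⟨a - 1, by omega⟩)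
    (hE : ∀ i j : Fin (a + b), a ≤ (i : ℕ) → (j : ℕ) < a →
      ¬((i : ℕ) = a ∧ (j : ℕ) = a - 1) → M i j = 0)
    (hεp : (p : ℤ_[p]) ∣ ε)
    (hχA : PadicInt.toZMod (A.charpoly.eval 0) ≠ 0)
    -- the Hensel factorization χ_M = χ_big ⋅ χ_small with χ_small ≡ χ_B mod ε
    (χbig χsmall : Polynomial ℤ_[p])
    (hfact : M.charpoly = χbig * χsmall)
    (hbig : ∀ i, ε ∣ (χbig - A.charpoly).coeff i)
    (hsmall : ∀ i, ε ∣ (χsmall - B.charpoly).coeff i)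
    -- the smallness hypothesis ‖χ_small − t^b‖ ≤ |ε|
    (hnorm : ∀ i, ‖(χsmall - X ^ b).coeff i‖ ≤ ‖ε‖)
    -- b QR-rounds
    (Mseq : ℕ → Matrix (Fin (a + b)) (Fin (a + b)) ℤ_[p])
    (hM0 : Mseq 0 = M)
    (hQR : ∀ i < b, ∃ Q R : Matrix (Fin (a + b)) (Fin (a + b)) ℤ_[p],
      IsUnit Q ∧ (∀ s t : Fin (a + b), (t : ℕ) < (s : ℕ) → R s t = 0) ∧
      Mseq i = Q * R ∧ Mseq (i + 1) = R * Q) :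
    ‖Mseq b (⟨a, by omega⟩ : Fin (a + b)) (⟨a - 1, by omega⟩ : Fin (a + b))‖
      ≤ ‖ε‖ ^ 2 := by
  have hAblock : (blockIncl ℤ_[p] a b)ᵀ * M * blockIncl ℤ_[p] a b = A := by
    ext i j
    simp [hA]
  have hBblock : blockProj ℤ_[p] a b * M * (blockProj ℤ_[p] a b)ᵀ = B := by
    ext i j
    simp [hB]
  have hM := entrywiseDvd_blockLower_of_single_entry rfl rfl hε hE
  have hεm : ε ∈ maximalIdeal ℤ_[p] := by
    rw [PadicInt.maximalIdeal_eq_span_p]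
    exact Ideal.mem_span_singleton.mpr hεp
  have hAunit : IsUnit A.det := by
    rw [det_eq_sign_charpoly_coeff, coeff_zero_eq_eval_zero]
    exact (isUnit_neg_one.pow _).mul (PadicInt.isUnit_of_toZMod_ne_zero hχA)
  rw [← hAblock] at hAunit hbig
  rw [← hBblock] at hsmall
  have hdvd := entrywiseDvd_mul_self_blockLower_of_qrRounds hεm hM hAunit hfact
    ((C_dvd_iff_dvd_coeff _ _).mpr hbig) ((C_dvd_iff_dvd_coeff _ _).mpr hsmall)
    ((C_dvd_iff_dvd_coeff _ _).mpr fun i => PadicInt.dvd_of_norm_le (hnorm i)) Mseq hM0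
    fun i hi => by
      obtain ⟨Q, R, hQ, hR, h⟩ := hQR i hi
      exact ⟨Q, R, hQ, fun s t hst => hR s t hst, h⟩
  have hentry := hdvd ⟨0, hb⟩ ⟨a - 1, by omega⟩
  simp only [mul_blockIncl, blockProj_mul, submatrix_apply, id_eq] at hentry
  calc ‖Mseq b ⟨a, by omega⟩ ⟨a - 1, by omega⟩‖ ≤ ‖ε * ε‖ := PadicInt.norm_le_of_dvd hentry
    _ = ‖ε‖ ^ 2 := by rw [norm_mul, sq]
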